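/- arXiv:2401.09305 — 6 statements merged into one kernel-verified Lean document; each statement's English description precedes it below -/
import Mathlib

section
/- Let γ > 1 and Q(v) = v^{1-γ}/(γ-1) for v > 0, so Q'(v) = -v^{-γ}. Fix v* > 0. There exists C > 0 such that for every w ∈ (0, 2v*): (a) Q(v|w) ≥ C⁻¹|v-w|² for all 0 < v ≤ 3v*, and (b) Q(v|w) ≥ C⁻¹|v-w| for all v ≥ 3v*, where Q(v|w) := Q(v) - Q(w) - Q'(w)(v-w). -/
/-!
On `(0, b]` the second derivative `γ x^(-γ-1)` of `Q` is at least `m := γ b^(-γ-1)`, so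
`Q(v|w) ≥ m/2 (v - w)²` there. For `v ≥ b := 3v*` the three-point identity
`Q(v|w) = Q(v|b) + Q(b|w) + (w^(-γ) - b^(-γ))(v - b)` gives linear growth: `Q(v|b) ≥ 0`,
`Q(b|w) ≥ m/2 (b - w)² ≥ m/2 v* (b - w)`, and `w^(-γ) - b^(-γ) ≥ (2v*)^(-γ) - (3v*)^(-γ) > 0`.
-/

open Real Set

lemma ConvexOn.add_mul_sub_le_of_hasDerivAt {S : Set ℝ} {f : ℝ → ℝ} {w v d : ℝ}
    (hf : ConvexOn ℝ S f) (hw : w ∈ S) (hv : v ∈ S) (hd : HasDerivAt f d w) :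
    f w + d * (v - w) ≤ f v := by
  rcases lt_trichotomy w v with h | rfl | h
  · have hslope := hf.le_slope_of_hasDerivAt hw hv h hd
    rw [slope_def_field, le_div_iff₀ (sub_pos.mpr h)] at hslope
    linarith
  · simp
  · have hslope := hf.slope_le_of_hasDerivAt hv hw h hd
    rw [slope_def_field, div_le_iff₀ (sub_pos.mpr h)] at hslope
    linarith

lemma mul_sq_le_bregman_of_le_deriv2 {S : Set ℝ} (hS : Convex ℝ S) {f f' f'' : ℝ → ℝ} {m : ℝ}
    (hf : ∀ x ∈ S, HasDerivAt f (f' x) x) (hf' : ∀ x ∈ interior S, HasDerivAt f' (f'' x) x)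
    (hm : ∀ x ∈ interior S, m ≤ f'' x) {v w : ℝ} (hv : v ∈ S) (hw : w ∈ S) :
    m / 2 * (v - w) ^ 2 ≤ f v - f w - f' w * (v - w) := by
  have hsq : ∀ x, HasDerivAt (fun t => m / 2 * t ^ 2) (m * x) x := fun x =>
    ((hasDerivAt_pow 2 x).const_mul (m / 2)).congr_deriv (by push_cast; ring)
  have hg : ∀ x ∈ S, HasDerivAt (fun t => f t - m / 2 * t ^ 2) (f' x - m * x) x :=
    fun x hx => (hf x hx).sub (hsq x)
  have hconv : ConvexOn ℝ S (fun t => f t - m / 2 * t ^ 2) :=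
    convexOn_of_hasDerivWithinAt2_nonneg (f'' := fun x => f'' x - m) hS
      (fun x hx => (hg x hx).continuousAt.continuousWithinAt)
      (fun x hx => (hg x (interior_subset hx)).hasDerivWithinAt)
      (fun x hx =>
        ((hf' x hx).sub ((hasDerivAt_id' x).const_mul m)).hasDerivWithinAt.congr_deriv (by ring))
      (fun x hx => sub_nonneg.mpr (hm x hx))
  linear_combination hconv.add_mul_sub_le_of_hasDerivAt hw hv (hg w hw)

section RelativeQ

variable {γ : ℝ}

/-- `Q(v|w)` for `Q(v) = v^(1-γ)/(γ-1)`, so that `p(w) = -Q'(w) = w^(-γ)`. -/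
noncomputable def relQ (γ v w : ℝ) : ℝ :=
  v ^ (1 - γ) / (γ - 1) - w ^ (1 - γ) / (γ - 1) + w ^ (-γ) * (v - w)

lemma hasDerivAt_rpow_one_sub_div (hγ : 1 < γ) {x : ℝ} (hx : 0 < x) :
    HasDerivAt (fun t : ℝ => t ^ (1 - γ) / (γ - 1)) (-x ^ (-γ)) x := by
  have h := (hasDerivAt_rpow_const (p := 1 - γ) (Or.inl hx.ne')).div_const (γ - 1)
  rw [show 1 - γ - 1 = -γ by ring] at h
  refine h.congr_deriv ?_
  field_simp [sub_ne_zero.mpr hγ.ne']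
  ring

lemma hasDerivAt_neg_rpow_neg {x : ℝ} (hx : 0 < x) :
    HasDerivAt (fun t : ℝ => -t ^ (-γ)) (γ * x ^ (-γ - 1)) x :=
  (hasDerivAt_rpow_const (p := -γ) (Or.inl hx.ne')).neg.congr_deriv (by ring)

lemma mul_sq_le_relQ (hγ : 1 < γ) {b v w : ℝ} (hv : v ∈ Ioc 0 b) (hw : w ∈ Ioc 0 b) :
    γ * b ^ (-γ - 1) / 2 * (v - w) ^ 2 ≤ relQ γ v w := by
  have h := mul_sq_le_bregman_of_le_deriv2 (convex_Ioc 0 b)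
    (fun x hx => hasDerivAt_rpow_one_sub_div hγ hx.1)
    (fun x hx => hasDerivAt_neg_rpow_neg (γ := γ) (interior_Ioc (a := (0 : ℝ)) ▸ hx).1)
    (fun x hx => by
      obtain ⟨hx0, hxb⟩ := interior_Ioc (a := (0 : ℝ)) ▸ hx
      exact mul_le_mul_of_nonneg_left
        (rpow_le_rpow_of_nonpos hx0 hxb.le (by linarith)) (by linarith))
    hv hw
  unfold relQ
  linarith

lemma relQ_nonneg (hγ : 1 < γ) {v w : ℝ} (hv : 0 < v) (hw : 0 < w) : 0 ≤ relQ γ v w := by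
  have h := mul_sq_le_relQ hγ (b := max v w) ⟨hv, le_max_left v w⟩ ⟨hw, le_max_right v w⟩
  have : 0 ≤ γ * max v w ^ (-γ - 1) / 2 * (v - w) ^ 2 := by
    have := rpow_pos_of_pos (lt_max_of_lt_left hv : 0 < max v w) (-γ - 1)
    have := sq_nonneg (v - w)
    have : 0 < γ := by linarith
    positivity
  linarith

lemma relQ_eq_add_add (v b w : ℝ) :
    relQ γ v w = relQ γ v b + relQ γ b w + (w ^ (-γ) - b ^ (-γ)) * (v - b) := by
  simp only [relQ]
  ring

lemma mul_sub_le_relQ (hγ : 1 < γ) {a b v w ε : ℝ} (hw : 0 < w) (hwa : w ≤ a) (hab : a ≤ b)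
    (hbv : b ≤ v) (hεb : ε ≤ γ * b ^ (-γ - 1) / 2 * (b - a)) (hεa : ε ≤ a ^ (-γ) - b ^ (-γ)) :
    ε * (v - w) ≤ relQ γ v w := by
  set m := γ * b ^ (-γ - 1) / 2
  have hm : 0 < m := by
    have := rpow_pos_of_pos (hw.trans_le (hwa.trans hab)) (-γ - 1)
    have : 0 < γ := by linarith
    positivity
  have hnear : m * (b - w) ^ 2 ≤ relQ γ b w :=
    mul_sq_le_relQ hγ ⟨hw.trans_le (hwa.trans hab), le_rfl⟩ ⟨hw, hwa.trans hab⟩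
  have hfar : 0 ≤ relQ γ v b := relQ_nonneg hγ (by linarith) (by linarith)
  have hslope : a ^ (-γ) - b ^ (-γ) ≤ w ^ (-γ) - b ^ (-γ) :=
    sub_le_sub_right (rpow_le_rpow_of_nonpos hw hwa (by linarith)) _
  calc ε * (v - w) = ε * (b - w) + ε * (v - b) := by ring
    _ ≤ m * (b - a) * (b - w) + (a ^ (-γ) - b ^ (-γ)) * (v - b) := by
        gcongr; linarith
    _ ≤ m * (b - w) * (b - w) + (w ^ (-γ) - b ^ (-γ)) * (v - b) := by
        gcongr; linarith
    _ ≤ relQ γ v w := by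
        rw [relQ_eq_add_add v b w]
        linarith [show m * (b - w) * (b - w) = m * (b - w) ^ 2 by ring]

end RelativeQ

/-- Quadratic/linear lower bounds for the relative internal energy
`Q(v|w) = Q(v) - Q(w) + w^(-γ)(v - w)` with `Q(v) = v^(1-γ)/(γ-1)`. -/
theorem relative_Q_lower_bounds (γ : ℝ) (hγ : 1 < γ) (vs : ℝ) (hvs : 0 < vs) :
    ∃ C > 0, ∀ w : ℝ, 0 < w → w < 2 * vs →
      (∀ v : ℝ, 0 < v → v ≤ 3 * vs →
        C⁻¹ * |v - w| ^ 2 ≤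
          v ^ (1 - γ) / (γ - 1) - w ^ (1 - γ) / (γ - 1) + w ^ (-γ) * (v - w)) ∧
      (∀ v : ℝ, 3 * vs ≤ v →
        C⁻¹ * |v - w| ≤
          v ^ (1 - γ) / (γ - 1) - w ^ (1 - γ) / (γ - 1) + w ^ (-γ) * (v - w)) := by
  set m := γ * (3 * vs) ^ (-γ - 1) / 2
  set c := (2 * vs) ^ (-γ) - (3 * vs) ^ (-γ)
  have hm : 0 < m := by have := rpow_pos_of_pos (by linarith : 0 < 3 * vs) (-γ - 1); positivity
  have hc : 0 < c := sub_pos.mpr (rpow_lt_rpow_of_neg (by linarith) (by linarith) (by linarith))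
  set ε := min m (min (m * vs) c)
  have hεm : ε ≤ m := min_le_left _ _
  have hεmvs : ε ≤ m * (3 * vs - 2 * vs) := by
    rw [show 3 * vs - 2 * vs = vs by ring]
    exact (min_le_right _ _).trans (min_le_left _ _)
  have hεc : ε ≤ c := (min_le_right _ _).trans (min_le_right _ _)
  refine ⟨ε⁻¹, by positivity, fun w hw hw2 => ⟨fun v hv hv3 => ?_, fun v hv3 => ?_⟩⟩
  · rw [inv_inv, sq_abs]
    calc ε * (v - w) ^ 2 ≤ m * (v - w) ^ 2 := by gcongr
      _ ≤ relQ γ v w := mul_sq_le_relQ hγ ⟨hv, hv3⟩ ⟨hw, by linarith⟩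
  · rw [inv_inv, abs_of_nonneg (by linarith)]
    exact mul_sub_le_relQ hγ hw hw2.le (by linarith) hv3 hεmvs hεc
end

section
/- Let γ > 1, p(v) = v^{-γ}, Q(v) = v^{1-γ}/(γ-1). Fix v* > 0. There exist C, ε* > 0 such that for all w > 0 with |p(w) - p(v*)| < ε* and all v > 0: p(v|w) ≤ C(|v - w| + |p(v) - p(w)|). -/
/-- For `p(v) = v^(-γ)`, there exist `C, ε* > 0` such that for all `w > 0` with
`|p(w) - p(v*)| < ε*` and all `v > 0`,
`p(v|w) ≤ C (|v - w| + |p(v) - p(w)|)`. -/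
theorem relative_pressure_global_bound (γ : ℝ) (hγ : 1 < γ) (vs : ℝ) (hvs : 0 < vs) :
    ∃ C > 0, ∃ ε > 0, ∀ w : ℝ, 0 < w → |w ^ (-γ) - vs ^ (-γ)| < ε →
      ∀ v : ℝ, 0 < v →
        v ^ (-γ) - w ^ (-γ) + γ * w ^ (-γ - 1) * (v - w) ≤
          C * (|v - w| + |v ^ (-γ) - w ^ (-γ)|) := by
  have hγ0 : (0:ℝ) < γ := by linarith
  set w₀ : ℝ := (2 * vs ^ (-γ)) ^ (-1/γ) with hw₀def
  have h2pos : (0:ℝ) < 2 * vs ^ (-γ) := by positivity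
  have hw₀pos : 0 < w₀ := Real.rpow_pos_of_pos h2pos _
  have hw₀γ : w₀ ^ (-γ) = 2 * vs ^ (-γ) := by
    rw [hw₀def, ← Real.rpow_mul h2pos.le]
    have : -1/γ * -γ = 1 := by field_simp
    rw [this, Real.rpow_one]
  have hCpos : 0 < 1 + γ * w₀ ^ (-γ - 1) := by positivity
  refine ⟨1 + γ * w₀ ^ (-γ - 1), hCpos, vs ^ (-γ), Real.rpow_pos_of_pos hvs _, ?_⟩
  intro w hw hwε v hv
  have hwlt : w₀ ≤ w := by
    by_contra h
    push_neg at h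
    have h1 : w ^ (-γ) < 2 * vs ^ (-γ) := by
      have := abs_lt.mp hwε; linarith [this.2]
    have h2 : w₀ ^ (-γ) ≤ w ^ (-γ) :=
      Real.rpow_le_rpow_of_nonpos hw h.le (by linarith)
    rw [hw₀γ] at h2; linarith
  have hm : w ^ (-γ - 1) ≤ w₀ ^ (-γ - 1) :=
    Real.rpow_le_rpow_of_nonpos hw₀pos hwlt (by linarith)
  have hpos : 0 < w ^ (-γ - 1) := Real.rpow_pos_of_pos hw _
  have habs1 : v ^ (-γ) - w ^ (-γ) ≤ |v ^ (-γ) - w ^ (-γ)| := le_abs_self _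
  have habs2 : v - w ≤ |v - w| := le_abs_self _
  have h3 : γ * w ^ (-γ - 1) * (v - w) ≤ γ * w ^ (-γ - 1) * |v - w| := by
    apply mul_le_mul_of_nonneg_left habs2 (by positivity)
  have h4 : γ * w ^ (-γ - 1) * |v - w| ≤ γ * w₀ ^ (-γ - 1) * |v - w| := by
    apply mul_le_mul_of_nonneg_right _ (abs_nonneg _)
    nlinarith
  have h5 : (0:ℝ) ≤ |v - w| := abs_nonneg _
  have h6 : (0:ℝ) ≤ |v ^ (-γ) - w ^ (-γ)| := abs_nonneg _
  have h7 : 0 < γ * w₀ ^ (-γ - 1) := by positivity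
  nlinarith [mul_nonneg h7.le h6, mul_nonneg h7.le h5]
end

section
/- Let γ > 1 and for v > 0 set p(v) = v^{-γ}, Q(v) = v^{1-γ}/(γ-1). Then for all v, w > 0 one has the expansion inequality Q(v|w) ≥ (p(w)^{-1/γ - 1}/(2γ)) |p(v) - p(w)|² − ((1+γ)/(3γ²)) p(w)^{-1/γ - 2} (p(v) - p(w))³ whenever |p(v) − p(w)| and |p(w) − p(v*)| are smaller than a suitable ε* > 0 depending only on γ and v* > 0. -/
/-!
With `t = p(v)/p(w) = (v/w)^(-γ)`, homogeneity turns `Q(v|w)` minus the claimed lower bound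
into `w^(1-γ) φ(t)` for an explicit `φ = relQGap γ` with `φ(1) = 0`. Its derivative is
`φ'(t) = (t-1)/γ · (t^(-1/γ-1) - 1 + (1/γ+1)(t-1))`, where the bracket is the gap between the
convex function `t ↦ t^(-1/γ-1)` and its tangent at `1`. So `φ` decreases before `1` and
increases after it, `φ ≥ 0`, and the inequality holds for all `v, w > 0`: any `ε` will do.
-/

open Real Set

theorem one_add_mul_sub_one_le_rpow_of_nonpos {p t : ℝ} (hp : p ≤ 0) (ht : 0 < t) :
    1 + p * (t - 1) ≤ t ^ p := by
  calc 1 + p * (t - 1) ≤ p * log t + 1 := by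
        nlinarith [mul_le_mul_of_nonpos_left (log_le_sub_one_of_pos ht) hp]
    _ ≤ exp (p * log t) := add_one_le_exp _
    _ = t ^ p := by rw [rpow_def_of_pos ht, mul_comm]

theorem le_of_hasDerivAt_of_sub_mul_nonneg {f f' : ℝ → ℝ} {s : Set ℝ} {c t : ℝ}
    (hs : s.OrdConnected) (hf : ∀ x ∈ s, HasDerivAt f (f' x) x)
    (hf' : ∀ x ∈ s, 0 ≤ (x - c) * f' x) (hc : c ∈ s) (ht : t ∈ s) : f c ≤ f t := by
  rcases le_total c t with hct | htc
  · have hsub : Icc c t ⊆ s := hs.out hc ht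
    refine monotoneOn_of_hasDerivWithinAt_nonneg (convex_Icc c t)
      (fun x hx => (hf x (hsub hx)).continuousAt.continuousWithinAt)
      (fun x hx => (hf x (hsub (interior_subset hx))).hasDerivWithinAt) (fun x hx => ?_)
      (left_mem_Icc.2 hct) (right_mem_Icc.2 hct) hct
    rw [interior_Icc] at hx
    exact nonneg_of_mul_nonneg_right (hf' x (hsub (Ioo_subset_Icc_self hx))) (sub_pos.2 hx.1)
  · have hsub : Icc t c ⊆ s := hs.out ht hc
    refine antitoneOn_of_hasDerivWithinAt_nonpos (convex_Icc t c)
      (fun x hx => (hf x (hsub hx)).continuousAt.continuousWithinAt)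
      (fun x hx => (hf x (hsub (interior_subset hx))).hasDerivWithinAt) (fun x hx => ?_)
      (left_mem_Icc.2 htc) (right_mem_Icc.2 htc) htc
    rw [interior_Icc] at hx
    exact nonpos_of_mul_nonneg_right (hf' x (hsub (Ioo_subset_Icc_self hx))) (sub_neg.2 hx.2)

theorem rpow_neg_rpow_neg_one_div {x γ : ℝ} (hx : 0 ≤ x) (hγ : γ ≠ 0) :
    (x ^ (-γ)) ^ (-1 / γ) = x := by
  rw [← rpow_mul hx, show -γ * (-1 / γ) = 1 by field_simp, rpow_one]

noncomputable def relQGap (γ t : ℝ) : ℝ :=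
  (t ^ (1 - 1 / γ) - 1) / (γ - 1) + t ^ (-1 / γ) - 1 - (t - 1) ^ 2 / (2 * γ) +
    (1 + γ) / (3 * γ ^ 2) * (t - 1) ^ 3

theorem relQ_sub_cubicBound_eq {γ v w : ℝ} (hγ : γ ≠ 0) (hv : 0 < v) (hw : 0 < w) :
    v ^ (1 - γ) / (γ - 1) - w ^ (1 - γ) / (γ - 1) + w ^ (-γ) * (v - w) -
      ((w ^ (-γ)) ^ (-1 / γ - 1) / (2 * γ) * |v ^ (-γ) - w ^ (-γ)| ^ 2 -
        (1 + γ) / (3 * γ ^ 2) * (w ^ (-γ)) ^ (-1 / γ - 2) * (v ^ (-γ) - w ^ (-γ)) ^ 3) =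
    w ^ (1 - γ) * relQGap γ ((v / w) ^ (-γ)) := by
  set s := v / w with hs_def
  have hs : 0 < s := div_pos hv hw
  have hv_eq : v = s * w := by rw [hs_def, div_mul_cancel₀ v hw.ne']
  have hpw : (w ^ (-γ)) ^ (-1 / γ - 1) = w * w ^ γ := by
    rw [rpow_sub_one (rpow_pos_of_pos hw _).ne', rpow_neg_rpow_neg_one_div hw.le hγ,
      rpow_neg hw.le, div_inv_eq_mul]
  have hpw₂ : (w ^ (-γ)) ^ (-1 / γ - 2) = w * (w ^ γ) ^ 2 := by
    rw [show -1 / γ - 2 = -1 / γ - 1 - 1 by ring, rpow_sub_one (rpow_pos_of_pos hw _).ne', hpw,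
      rpow_neg hw.le, div_inv_eq_mul]
    ring
  have hs₁ : (s ^ (-γ)) ^ (1 - 1 / γ) = s ^ (1 - γ) := by
    rw [← rpow_mul hs.le]; congr 1; field_simp; ring
  rw [relQGap, hs₁, rpow_neg_rpow_neg_one_div hs.le hγ, hpw, hpw₂, sq_abs, hv_eq,
    mul_rpow hs.le hw.le, mul_rpow hs.le hw.le, rpow_sub hw, rpow_one, rpow_neg hw.le,
    rpow_neg hs.le]
  field_simp
  ring

theorem hasDerivAt_relQGap {γ t : ℝ} (hγ₀ : γ ≠ 0) (hγ₁ : γ ≠ 1) (ht : 0 < t) :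
    HasDerivAt (relQGap γ)
      ((t - 1) / γ * (t ^ (-1 / γ - 1) - (1 + (-1 / γ - 1) * (t - 1)))) t := by
  have h₁ := hasDerivAt_rpow_const (p := 1 - 1 / γ) (Or.inl ht.ne')
  have h₂ := hasDerivAt_rpow_const (p := -1 / γ) (Or.inl ht.ne')
  have h₃ := ((hasDerivAt_id t).sub_const 1).fun_pow 2
  have h₄ := ((hasDerivAt_id t).sub_const 1).fun_pow 3
  refine (((((h₁.sub_const 1).div_const (γ - 1)).add h₂).sub_const 1).sub
      (h₃.div_const (2 * γ)) |>.add (h₄.const_mul ((1 + γ) / (3 * γ ^ 2)))).congr_deriv ?_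
  have hγ₁ : γ - 1 ≠ 0 := sub_ne_zero.2 hγ₁
  rw [show 1 - 1 / γ - 1 = -1 / γ by ring, show t ^ (-1 / γ) = t ^ (-1 / γ - 1) * t by
    rw [← rpow_add_one ht.ne']; ring_nf]
  simp only [id]
  field_simp
  ring

theorem relQGap_nonneg {γ t : ℝ} (hγ : 1 < γ) (ht : 0 < t) : 0 ≤ relQGap γ t := by
  have hγ₀ : 0 < γ := by linarith
  have hgap_one : relQGap γ 1 = 0 := by simp [relQGap]
  rw [← hgap_one]
  refine le_of_hasDerivAt_of_sub_mul_nonneg ordConnected_Ioi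
    (fun x hx => hasDerivAt_relQGap hγ₀.ne' hγ.ne' hx) (fun x hx => ?_) (mem_Ioi.2 one_pos) ht
  have hp : -1 / γ - 1 ≤ 0 := by rw [neg_div]; linarith [one_div_pos.2 hγ₀]
  have htangent := one_add_mul_sub_one_le_rpow_of_nonpos hp (mem_Ioi.1 hx)
  rw [← mul_assoc, ← mul_div_assoc, ← sq]
  exact mul_nonneg (by positivity) (sub_nonneg.2 htangent)

theorem relative_Q_pressure_expansion_general (γ : ℝ) (hγ : 1 < γ) (vs : ℝ) :
    ∃ ε > 0, ∀ v w : ℝ, 0 < v → 0 < w →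
      |v ^ (-γ) - w ^ (-γ)| < ε → |w ^ (-γ) - vs ^ (-γ)| < ε →
      (w ^ (-γ)) ^ (-1 / γ - 1) / (2 * γ) * |v ^ (-γ) - w ^ (-γ)| ^ 2 -
          (1 + γ) / (3 * γ ^ 2) * (w ^ (-γ)) ^ (-1 / γ - 2) * (v ^ (-γ) - w ^ (-γ)) ^ 3 ≤
        v ^ (1 - γ) / (γ - 1) - w ^ (1 - γ) / (γ - 1) + w ^ (-γ) * (v - w) := by
  refine ⟨1, one_pos, fun v w hv hw _ _ => ?_⟩
  rw [← sub_nonneg, relQ_sub_cubicBound_eq (by positivity) hv hw]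
  exact mul_nonneg (rpow_pos_of_pos hw _).le
    (relQGap_nonneg hγ (rpow_pos_of_pos (div_pos hv hw) _))

/-- Local quantitative lower bound of the relative internal energy `Q(v|w)` in terms
of the pressure difference, for pressures close to a reference `p(v*)`. -/
theorem relative_Q_pressure_expansion (γ : ℝ) (hγ : 1 < γ) (vs : ℝ) (hvs : 0 < vs) :
    ∃ ε > 0, ∀ v w : ℝ, 0 < v → 0 < w →
      |v ^ (-γ) - w ^ (-γ)| < ε → |w ^ (-γ) - vs ^ (-γ)| < ε →
      (w ^ (-γ)) ^ (-1 / γ - 1) / (2 * γ) * |v ^ (-γ) - w ^ (-γ)| ^ 2 -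
          (1 + γ) / (3 * γ ^ 2) * (w ^ (-γ)) ^ (-1 / γ - 2) * (v ^ (-γ) - w ^ (-γ)) ^ 3 ≤
        v ^ (1 - γ) / (γ - 1) - w ^ (1 - γ) / (γ - 1) + w ^ (-γ) * (v - w) :=
  relative_Q_pressure_expansion_general γ hγ vs
end

section
/- (Discrete-continuous Gronwall with jumps.) Let T > 0 and 0 = t₀ < t₁ < ⋯ < t_N < t_{N+1} = T. Let f, g, h : [0,T] → ℝ₊ be locally integrable nonnegative functions such that for positive constants c₀, c₁, C: ∫₀ᵀ h(t) dt ≤ C; on each open interval (t_j, t_{j+1}), f is absolutely continuous with f'(t) + g(t) ≤ C f(t) + c₀² h(t) and f(t) ≥ c₀; and at each t_j, f(t_j+) ≤ (1 + c₁) f(t_j−). Then there is a constant C' > 0 independent of c₀, c₁ such that for a.e. t ∈ [0,T]: f(t) ≤ f(0) exp(C'T + C'c₀ + N c₁), and ∫₀ᵀ g(t) dt ≤ f(0)(1 + C'T + N c₁) exp(C'T + C'c₀ + N c₁) + C' c₀². -/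
/-!
On each interval `(t j, t (j + 1))` the lower bound `f ≥ c₀` gives `c₀² h ≤ (c₀ h) f`, so the
differential inequality becomes linear, `(log f)' ≤ C + c₀ h`, and `f` stays below its right
limit at `t j` times `exp ∫ (C + c₀ h)`. Each jump multiplies this running bound by at most
`1 + c₁ ≤ exp c₁`, and `∫ h ≤ C`, so `f ≤ M := f 0 * exp (C T + C c₀ + N c₁)`. For `g`,
integrate `g ≤ C M + c₀² h - f'` over each interval: the boundary terms telescope to `f 0` plus
the jump increments `fp j - fm j ≤ c₁ fm j ≤ c₁ M`.
-/

open MeasureTheory Filter Set Topology intervalIntegral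

theorem exists_mem_Ico_of_le_of_lt {t : ℕ → ℝ} {s : ℝ} :
    ∀ {N : ℕ}, t 0 ≤ s → s < t (N + 1) → ∃ j ≤ N, s ∈ Ico (t j) (t (j + 1))
  | 0, h0, hN => ⟨0, le_rfl, h0, hN⟩
  | N + 1, h0, hN => by
    rcases lt_or_ge s (t (N + 1)) with hs | hs
    · obtain ⟨j, hj, hmem⟩ := exists_mem_Ico_of_le_of_lt h0 hs
      exact ⟨j, hj.trans N.le_succ, hmem⟩
    · exact ⟨N + 1, le_rfl, hs, hN⟩

theorem ae_restrict_Icc_of_forall_mem_Ioo {t : ℕ → ℝ} {N : ℕ} {p : ℝ → Prop}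
    (hp : ∀ j ≤ N, ∀ s ∈ Ioo (t j) (t (j + 1)), p s) :
    ∀ᵐ s ∂volume.restrict (Icc (t 0) (t (N + 1))), p s := by
  filter_upwards [ae_restrict_of_ae ((countable_range t).ae_notMem volume),
    ae_restrict_mem measurableSet_Icc] with s hst hs
  have hne : ∀ j, s ≠ t j := fun j he => hst ⟨j, he.symm⟩
  obtain ⟨j, hj, hsj⟩ := exists_mem_Ico_of_le_of_lt hs.1 (hs.2.lt_of_ne (hne _))
  exact hp j hj s ⟨hsj.1.lt_of_ne (hne j).symm, hsj.2⟩

theorem Icc_subset_Icc_of_forall_lt_succ {t : ℕ → ℝ} {N j : ℕ}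
    (ht : ∀ i ≤ N, t i < t (i + 1)) (hj : j ≤ N) :
    Icc (t j) (t (j + 1)) ⊆ Icc (t 0) (t (N + 1)) := by
  have hmono : MonotoneOn t (Iic (N + 1)) :=
    (strictMonoOn_Iic_of_lt_succ fun i hi => ht i (Nat.lt_succ_iff.mp hi)).monotoneOn
  exact Icc_subset_Icc (hmono (by simp) (by simp; omega) (Nat.zero_le _))
    (hmono (by simp; omega) (by simp) (by omega))

theorem IntervalIntegrable.of_mem_Icc {g : ℝ → ℝ} {a b x y : ℝ}
    (hg : IntervalIntegrable g volume a b) (hx : x ∈ Icc a b) (hy : y ∈ Icc a b) :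
    IntervalIntegrable g volume x y :=
  hg.mono_set (uIcc_subset_uIcc (Icc_subset_uIcc hx) (Icc_subset_uIcc hy))

theorem IntervalIntegrable.of_forall_lt_succ {t : ℕ → ℝ} {N j : ℕ} {g : ℝ → ℝ}
    (hg : IntervalIntegrable g volume (t 0) (t (N + 1))) (ht : ∀ i ≤ N, t i < t (i + 1))
    (hj : j ≤ N) : IntervalIntegrable g volume (t j) (t (j + 1)) :=
  hg.of_mem_Icc (Icc_subset_Icc_of_forall_lt_succ ht hj (left_mem_Icc.2 (ht j hj).le))
    (Icc_subset_Icc_of_forall_lt_succ ht hj (right_mem_Icc.2 (ht j hj).le))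

section Interval

variable {f f' g φ ψ : ℝ → ℝ} {a b L R : ℝ}

theorem le_mul_exp_integral_of_deriv_le_mul (hab : a ≤ b) (hcont : ContinuousOn f (Icc a b))
    (hderiv : ∀ s ∈ Ioo a b, HasDerivAt f (f' s) s) (hpos : ∀ s ∈ Icc a b, 0 < f s)
    (hφ : IntervalIntegrable φ volume a b) (hle : ∀ s ∈ Ioo a b, f' s ≤ φ s * f s) :
    f b ≤ f a * Real.exp (∫ s in a..b, φ s) := by
  have hlog : Real.log (f b) - Real.log (f a) ≤ ∫ s in a..b, φ s :=
    sub_le_integral_of_hasDeriv_right_of_le hab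
      (hcont.log fun s hs => (hpos s hs).ne')
      (fun s hs => ((hderiv s hs).log (hpos s (Ioo_subset_Icc_self hs)).ne').hasDerivWithinAt)
      ((intervalIntegrable_iff_integrableOn_Icc_of_le hab).mp hφ)
      (fun s hs => (div_le_iff₀ (hpos s (Ioo_subset_Icc_self hs))).mpr (hle s hs))
  rw [← Real.exp_log (hpos a (left_mem_Icc.mpr hab)), ← Real.exp_add,
    ← Real.log_le_iff_le_exp (hpos b (right_mem_Icc.mpr hab))]
  linarith

theorem integral_add_le_of_deriv_add_le (hab : a ≤ b) (hcont : ContinuousOn f (Icc a b))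
    (hderiv : ∀ s ∈ Ioo a b, HasDerivAt f (f' s) s) (hg : IntervalIntegrable g volume a b)
    (hψ : IntervalIntegrable ψ volume a b) (hle : ∀ s ∈ Ioo a b, f' s + g s ≤ ψ s) :
    (∫ s in a..b, g s) + f b ≤ (∫ s in a..b, ψ s) + f a := by
  have := sub_le_integral_of_hasDeriv_right_of_le hab hcont
    (fun s hs => (hderiv s hs).hasDerivWithinAt)
    ((intervalIntegrable_iff_integrableOn_Icc_of_le hab).mp (hψ.sub hg))
    (fun s hs => le_sub_iff_add_le.mpr (hle s hs))
  rw [integral_sub hψ hg] at this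
  linarith

theorem tendsto_integral_left_nhdsGT (hab : a < b) (hg : IntervalIntegrable g volume a b) :
    Tendsto (fun x => ∫ s in x..b, g s) (𝓝[>] a) (𝓝 (∫ s in a..b, g s)) := by
  have hcont := continuousOn_primitive_interval' hg right_mem_uIcc
  rw [uIcc_of_le hab.le] at hcont
  have hsymm (x : ℝ) : ∫ s in x..b, g s = -∫ s in b..x, g s := integral_symm b x
  simp only [hsymm]
  refine (hcont a (left_mem_Icc.mpr hab.le)).neg.mono_left ?_
  rw [← nhdsWithin_Ioo_eq_nhdsGT hab]
  exact nhdsWithin_mono _ Ioo_subset_Icc_self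

theorem tendsto_integral_right_nhdsLT (hab : a < b) (hg : IntervalIntegrable g volume a b) :
    Tendsto (fun y => ∫ s in a..y, g s) (𝓝[<] b) (𝓝 (∫ s in a..b, g s)) := by
  have hcont := continuousOn_primitive_interval' hg left_mem_uIcc
  rw [uIcc_of_le hab.le] at hcont
  refine (hcont b (right_mem_Icc.mpr hab.le)).mono_left ?_
  rw [← nhdsWithin_Ioo_eq_nhdsLT hab]
  exact nhdsWithin_mono _ Ioo_subset_Icc_self

theorem le_mul_exp_integral_of_tendsto_nhdsGT (hderiv : ∀ s ∈ Ioo a b, HasDerivAt f (f' s) s)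
    (hpos : ∀ s ∈ Ioo a b, 0 < f s) (hφ : IntervalIntegrable φ volume a b)
    (hφ₀ : ∀ s ∈ Icc a b, 0 ≤ φ s) (hle : ∀ s ∈ Ioo a b, f' s ≤ φ s * f s)
    (hL : Tendsto f (𝓝[>] a) (𝓝 L)) {y : ℝ} (hy : y ∈ Ioo a b) :
    f y ≤ L * Real.exp (∫ s in a..b, φ s) := by
  have hφ₀' : 0 ≤ᵐ[volume.restrict (Ioc a b)] φ :=
    ae_restrict_of_forall_mem measurableSet_Ioc fun s hs => hφ₀ s (Ioc_subset_Icc_self hs)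
  have hstep : ∀ x ∈ Ioo a y, f y ≤ f x * Real.exp (∫ s in a..b, φ s) := by
    intro x hx
    have hsub : Icc x y ⊆ Ioo a b := Icc_subset_Ioo hx.1 hy.2
    calc f y ≤ f x * Real.exp (∫ s in x..y, φ s) :=
          le_mul_exp_integral_of_deriv_le_mul hx.2.le
            (fun s hs => (hderiv s (hsub hs)).continuousAt.continuousWithinAt)
            (fun s hs => hderiv s (hsub (Ioo_subset_Icc_self hs)))
            (fun s hs => hpos s (hsub hs))
            (hφ.of_mem_Icc (Ioo_subset_Icc_self (hsub (left_mem_Icc.mpr hx.2.le)))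
              (Ioo_subset_Icc_self hy))
            (fun s hs => hle s (hsub (Ioo_subset_Icc_self hs)))
      _ ≤ f x * Real.exp (∫ s in a..b, φ s) := by
          have := hpos x (hsub (left_mem_Icc.mpr hx.2.le))
          gcongr
          exact integral_mono_interval hx.1.le hx.2.le hy.2.le hφ₀' hφ
  exact ge_of_tendsto (hL.mul_const _) (eventually_of_mem (Ioo_mem_nhdsGT hy.1) hstep)

theorem integral_add_le_of_tendsto_nhdsGT (hderiv : ∀ s ∈ Ioo a b, HasDerivAt f (f' s) s)
    (hg : IntervalIntegrable g volume a b) (hψ : IntervalIntegrable ψ volume a b)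
    (hle : ∀ s ∈ Ioo a b, f' s + g s ≤ ψ s) (hL : Tendsto f (𝓝[>] a) (𝓝 L)) {y : ℝ}
    (hy : y ∈ Ioo a b) : (∫ s in a..y, g s) + f y ≤ (∫ s in a..y, ψ s) + L := by
  have hay : Icc a y ⊆ Icc a b := Icc_subset_Icc_right hy.2.le
  have hstep : ∀ x ∈ Ioo a y, (∫ s in x..y, g s) + f y ≤ (∫ s in x..y, ψ s) + f x := by
    intro x hx
    have hsub : Icc x y ⊆ Ioo a b := Icc_subset_Ioo hx.1 hy.2
    exact integral_add_le_of_deriv_add_le hx.2.le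
      (fun s hs => (hderiv s (hsub hs)).continuousAt.continuousWithinAt)
      (fun s hs => hderiv s (hsub (Ioo_subset_Icc_self hs)))
      (hg.of_mem_Icc (hay (Ioo_subset_Icc_self hx)) (hay (right_mem_Icc.mpr hy.1.le)))
      (hψ.of_mem_Icc (hay (Ioo_subset_Icc_self hx)) (hay (right_mem_Icc.mpr hy.1.le)))
      (fun s hs => hle s (hsub (Ioo_subset_Icc_self hs)))
  have hgy := hg.of_mem_Icc (left_mem_Icc.mpr (hy.1.trans hy.2).le) (Ioo_subset_Icc_self hy)
  have hψy := hψ.of_mem_Icc (left_mem_Icc.mpr (hy.1.trans hy.2).le) (Ioo_subset_Icc_self hy)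
  exact le_of_tendsto_of_tendsto ((tendsto_integral_left_nhdsGT hy.1 hgy).add_const _)
    ((tendsto_integral_left_nhdsGT hy.1 hψy).add hL) (eventually_of_mem (Ioo_mem_nhdsGT hy.1) hstep)

theorem integral_add_le_of_tendsto_nhdsGT_nhdsLT (hab : a < b)
    (hderiv : ∀ s ∈ Ioo a b, HasDerivAt f (f' s) s) (hg : IntervalIntegrable g volume a b)
    (hψ : IntervalIntegrable ψ volume a b) (hle : ∀ s ∈ Ioo a b, f' s + g s ≤ ψ s)
    (hL : Tendsto f (𝓝[>] a) (𝓝 L)) (hR : Tendsto f (𝓝[<] b) (𝓝 R)) :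
    (∫ s in a..b, g s) + R ≤ (∫ s in a..b, ψ s) + L :=
  le_of_tendsto_of_tendsto ((tendsto_integral_right_nhdsLT hab hg).add hR)
    ((tendsto_integral_right_nhdsLT hab hψ).add_const L) <| eventually_of_mem (Ioo_mem_nhdsLT hab)
      fun _ hy => integral_add_le_of_tendsto_nhdsGT hderiv hg hψ hle hL hy

theorem integral_le_of_tendsto_nhdsGT (hab : a < b) (hderiv : ∀ s ∈ Ioo a b, HasDerivAt f (f' s) s)
    (hf₀ : ∀ s ∈ Ioo a b, 0 ≤ f s) (hg : IntervalIntegrable g volume a b)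
    (hψ : IntervalIntegrable ψ volume a b) (hle : ∀ s ∈ Ioo a b, f' s + g s ≤ ψ s)
    (hL : Tendsto f (𝓝[>] a) (𝓝 L)) :
    (∫ s in a..b, g s) ≤ (∫ s in a..b, ψ s) + L :=
  le_of_tendsto_of_tendsto (tendsto_integral_right_nhdsLT hab hg)
    ((tendsto_integral_right_nhdsLT hab hψ).add_const L) <| eventually_of_mem (Ioo_mem_nhdsLT hab)
      fun y hy => by linarith [integral_add_le_of_tendsto_nhdsGT hderiv hg hψ hle hL hy, hf₀ y hy]

end Interval

section Jumps

open Finset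

variable {t L fm : ℕ → ℝ} {N : ℕ} {c : ℝ} {f f' g φ ψ : ℝ → ℝ}

theorem le_mul_pow_mul_exp_sum {u E : ℕ → ℝ} (hc : 0 ≤ 1 + c)
    (hu : ∀ j < N, u (j + 1) ≤ (1 + c) * u j * Real.exp (E j)) :
    ∀ j ≤ N, u j ≤ u 0 * (1 + c) ^ j * Real.exp (∑ i ∈ range j, E i)
  | 0, _ => by simp
  | j + 1, hj => calc
      u (j + 1) ≤ (1 + c) * u j * Real.exp (E j) := hu j hj
      _ ≤ (1 + c) * (u 0 * (1 + c) ^ j * Real.exp (∑ i ∈ range j, E i)) * Real.exp (E j) := by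
          gcongr
          exact le_mul_pow_mul_exp_sum hc hu j (Nat.le_of_succ_le hj)
      _ = u 0 * (1 + c) ^ (j + 1) * Real.exp (∑ i ∈ range (j + 1), E i) := by
          rw [sum_range_succ, Real.exp_add, pow_succ]
          ring

theorem one_add_pow_le_exp_mul {j : ℕ} (hc : 0 ≤ c) (hj : j ≤ N) :
    (1 + c) ^ j ≤ Real.exp (N * c) := calc
  (1 + c) ^ j ≤ Real.exp c ^ j := by gcongr; linarith [Real.add_one_le_exp c]
  _ = Real.exp (j * c) := (Real.exp_nat_mul c j).symm
  _ ≤ Real.exp (N * c) := by gcongr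

theorem le_mul_exp_integral_of_jumps (hc : 0 ≤ c) (hL₀ : 0 ≤ L 0)
    (ht : ∀ j ≤ N, t j < t (j + 1))
    (hderiv : ∀ j ≤ N, ∀ s ∈ Ioo (t j) (t (j + 1)), HasDerivAt f (f' s) s)
    (hpos : ∀ j ≤ N, ∀ s ∈ Ioo (t j) (t (j + 1)), 0 < f s)
    (hφ : IntervalIntegrable φ volume (t 0) (t (N + 1)))
    (hφ₀ : ∀ s ∈ Icc (t 0) (t (N + 1)), 0 ≤ φ s)
    (hle : ∀ j ≤ N, ∀ s ∈ Ioo (t j) (t (j + 1)), f' s ≤ φ s * f s)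
    (hL : ∀ j ≤ N, Tendsto f (𝓝[>] t j) (𝓝 (L j)))
    (hfm : ∀ j < N, Tendsto f (𝓝[<] t (j + 1)) (𝓝 (fm (j + 1))))
    (hjump : ∀ j < N, L (j + 1) ≤ (1 + c) * fm (j + 1)) :
    ∀ j ≤ N, ∀ y ∈ Ioo (t j) (t (j + 1)),
      f y ≤ L 0 * Real.exp (N * c + ∫ s in t 0..t (N + 1), φ s) := by
  set E : ℕ → ℝ := fun j => ∫ s in t j..t (j + 1), φ s
  have hsub (j : ℕ) (hj : j ≤ N) := Icc_subset_Icc_of_forall_lt_succ ht hj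
  have hφj (j : ℕ) (hj : j ≤ N) := hφ.of_forall_lt_succ ht hj
  have hf (j : ℕ) (hj : j ≤ N) (y : ℝ) (hy : y ∈ Ioo (t j) (t (j + 1))) :
      f y ≤ L j * Real.exp (E j) :=
    le_mul_exp_integral_of_tendsto_nhdsGT (hderiv j hj) (hpos j hj) (hφj j hj)
      (fun s hs => hφ₀ s (hsub j hj hs)) (hle j hj) (hL j hj) hy
  have hrec : ∀ j < N, L (j + 1) ≤ (1 + c) * L j * Real.exp (E j) := fun j hj => by
    have hfm_le : fm (j + 1) ≤ L j * Real.exp (E j) :=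
      le_of_tendsto (hfm j hj) (eventually_of_mem (Ioo_mem_nhdsLT (ht j hj.le)) (hf j hj.le))
    rw [mul_assoc]
    exact (hjump j hj).trans (mul_le_mul_of_nonneg_left hfm_le (by linarith))
  have hE₀ (i : ℕ) (hi : i ≤ N) : 0 ≤ E i :=
    intervalIntegral.integral_nonneg (ht i hi).le fun s hs => hφ₀ s (hsub i hi hs)
  have hsum : ∀ j ≤ N, ∑ i ∈ range (j + 1), E i ≤ ∫ s in t 0..t (N + 1), φ s := fun j hj => by
    rw [← sum_integral_adjacent_intervals fun i hi => hφj i (Nat.lt_succ_iff.mp hi)]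
    exact sum_le_sum_of_subset_of_nonneg (range_subset_range.mpr (by omega))
      fun i hi _ => hE₀ i (Nat.lt_succ_iff.mp (mem_range.mp hi))
  intro j hj y hy
  calc f y ≤ L j * Real.exp (E j) := hf j hj y hy
    _ ≤ L 0 * (1 + c) ^ j * Real.exp (∑ i ∈ range j, E i) * Real.exp (E j) := by
        gcongr
        exact le_mul_pow_mul_exp_sum (by linarith) hrec j hj
    _ = L 0 * (1 + c) ^ j * Real.exp (∑ i ∈ range (j + 1), E i) := by
        rw [sum_range_succ, Real.exp_add]
        ring
    _ ≤ L 0 * Real.exp (N * c) * Real.exp (∫ s in t 0..t (N + 1), φ s) := by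
        gcongr L 0 * ?_ * Real.exp ?_
        exacts [one_add_pow_le_exp_mul hc hj, hsum j hj]
    _ = L 0 * Real.exp (N * c + ∫ s in t 0..t (N + 1), φ s) := by
        rw [Real.exp_add]
        ring

theorem integral_le_of_jumps {M : ℝ} (hc : 0 ≤ c) (ht : ∀ j ≤ N, t j < t (j + 1))
    (hderiv : ∀ j ≤ N, ∀ s ∈ Ioo (t j) (t (j + 1)), HasDerivAt f (f' s) s)
    (hf₀ : ∀ s ∈ Icc (t 0) (t (N + 1)), 0 ≤ f s)
    (hfM : ∀ j ≤ N, ∀ s ∈ Ioo (t j) (t (j + 1)), f s ≤ M)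
    (hg : IntervalIntegrable g volume (t 0) (t (N + 1)))
    (hψ : IntervalIntegrable ψ volume (t 0) (t (N + 1)))
    (hle : ∀ j ≤ N, ∀ s ∈ Ioo (t j) (t (j + 1)), f' s + g s ≤ ψ s)
    (hL : ∀ j ≤ N, Tendsto f (𝓝[>] t j) (𝓝 (L j)))
    (hfm : ∀ j < N, Tendsto f (𝓝[<] t (j + 1)) (𝓝 (fm (j + 1))))
    (hjump : ∀ j < N, L (j + 1) ≤ (1 + c) * fm (j + 1)) :
    (∫ s in t 0..t (N + 1), g s) ≤ (∫ s in t 0..t (N + 1), ψ s) + L 0 + N * (c * M) := by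
  have hmid : ∀ j < N,
      (∫ s in t j..t (j + 1), g s) + fm (j + 1) ≤ (∫ s in t j..t (j + 1), ψ s) + L j :=
    fun j hj => integral_add_le_of_tendsto_nhdsGT_nhdsLT (ht j hj.le) (hderiv j hj.le)
      (hg.of_forall_lt_succ ht hj.le) (hψ.of_forall_lt_succ ht hj.le) (hle j hj.le) (hL j hj.le)
      (hfm j hj)
  have hlast : (∫ s in t N..t (N + 1), g s) ≤ (∫ s in t N..t (N + 1), ψ s) + L N :=
    integral_le_of_tendsto_nhdsGT (ht N le_rfl) (hderiv N le_rfl)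
      (fun s hs => hf₀ s (Icc_subset_Icc_of_forall_lt_succ ht le_rfl (Ioo_subset_Icc_self hs)))
      (hg.of_forall_lt_succ ht le_rfl) (hψ.of_forall_lt_succ ht le_rfl) (hle N le_rfl) (hL N le_rfl)
  have hjump_sum : ∑ j ∈ range N, (L (j + 1) - fm (j + 1)) ≤ ∑ j ∈ range N, c * M :=
    sum_le_sum fun j hj => by
      have hj := mem_range.mp hj
      have hfmM : fm (j + 1) ≤ M :=
        le_of_tendsto (hfm j hj) (eventually_of_mem (Ioo_mem_nhdsLT (ht j hj.le)) (hfM j hj.le))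
      nlinarith [hjump j hj]
  have hmid_sum := sum_le_sum fun j hj => hmid j (mem_range.mp hj)
  have htelescope : ∑ j ∈ range N, L j + L N = L 0 + ∑ j ∈ range N, L (j + 1) := by
    rw [← sum_range_succ, sum_range_succ']
    ring
  rw [← sum_integral_adjacent_intervals (a := t) (n := N + 1)
      fun j hj => hg.of_forall_lt_succ ht (Nat.lt_succ_iff.mp hj),
    ← sum_integral_adjacent_intervals (a := t) (n := N + 1)
      fun j hj => hψ.of_forall_lt_succ ht (Nat.lt_succ_iff.mp hj),
    sum_range_succ, sum_range_succ]
  simp only [sum_add_distrib, sum_sub_distrib, sum_const, card_range, nsmul_eq_mul]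
    at hmid_sum hjump_sum
  linarith

end Jumps

section ODE

variable {t L fm : ℕ → ℝ} {N : ℕ} {C c₀ c₁ : ℝ} {f g h : ℝ → ℝ}

theorem le_mul_exp_of_ode_of_jumps (hC : 0 ≤ C) (hc₀ : 0 < c₀) (hc₁ : 0 ≤ c₁) (hL₀ : 0 ≤ L 0)
    (ht : ∀ j ≤ N, t j < t (j + 1)) (hgh : ∀ s ∈ Icc (t 0) (t (N + 1)), 0 ≤ g s ∧ 0 ≤ h s)
    (hh : IntervalIntegrable h volume (t 0) (t (N + 1)))
    (hode : ∀ j ≤ N, ∀ s ∈ Ioo (t j) (t (j + 1)),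
      HasDerivAt f (deriv f s) s ∧ deriv f s + g s ≤ C * f s + c₀ ^ 2 * h s ∧ c₀ ≤ f s)
    (hL : ∀ j ≤ N, Tendsto f (𝓝[>] t j) (𝓝 (L j)))
    (hfm : ∀ j < N, Tendsto f (𝓝[<] t (j + 1)) (𝓝 (fm (j + 1))))
    (hjump : ∀ j < N, L (j + 1) ≤ (1 + c₁) * fm (j + 1)) :
    ∀ j ≤ N, ∀ y ∈ Ioo (t j) (t (j + 1)), f y ≤
      L 0 * Real.exp (N * c₁ + (C * (t (N + 1) - t 0) + c₀ * ∫ s in t 0..t (N + 1), h s)) := by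
  have hlin (j : ℕ) (hj : j ≤ N) (s : ℝ) (hs : s ∈ Ioo (t j) (t (j + 1))) :
      deriv f s ≤ (C + c₀ * h s) * f s := by
    obtain ⟨-, hineq, hc₀f⟩ := hode j hj s hs
    obtain ⟨hg₀, hh₀⟩ := hgh s (Icc_subset_Icc_of_forall_lt_succ ht hj (Ioo_subset_Icc_self hs))
    nlinarith [mul_le_mul_of_nonneg_left hc₀f (mul_nonneg hc₀.le hh₀)]
  have hφ : IntervalIntegrable (fun s => C + c₀ * h s) volume (t 0) (t (N + 1)) :=
    intervalIntegrable_const.add (hh.const_mul c₀)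
  have := le_mul_exp_integral_of_jumps hc₁ hL₀ ht (fun j hj s hs => (hode j hj s hs).1)
    (fun j hj s hs => hc₀.trans_le (hode j hj s hs).2.2) hφ
    (fun s hs => by have := (hgh s hs).2; positivity) hlin hL hfm hjump
  rwa [integral_add intervalIntegrable_const (hh.const_mul c₀), intervalIntegral.integral_const,
    intervalIntegral.integral_const_mul, smul_eq_mul, mul_comm _ C] at this

theorem integral_le_of_ode_of_jumps {M : ℝ} (hC : 0 ≤ C) (hc₁ : 0 ≤ c₁)
    (ht : ∀ j ≤ N, t j < t (j + 1))
    (hf₀ : ∀ s ∈ Icc (t 0) (t (N + 1)), 0 ≤ f s)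
    (hfM : ∀ j ≤ N, ∀ s ∈ Ioo (t j) (t (j + 1)), f s ≤ M)
    (hg : IntervalIntegrable g volume (t 0) (t (N + 1)))
    (hh : IntervalIntegrable h volume (t 0) (t (N + 1)))
    (hode : ∀ j ≤ N, ∀ s ∈ Ioo (t j) (t (j + 1)),
      HasDerivAt f (deriv f s) s ∧ deriv f s + g s ≤ C * f s + c₀ ^ 2 * h s ∧ c₀ ≤ f s)
    (hL : ∀ j ≤ N, Tendsto f (𝓝[>] t j) (𝓝 (L j)))
    (hfm : ∀ j < N, Tendsto f (𝓝[<] t (j + 1)) (𝓝 (fm (j + 1))))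
    (hjump : ∀ j < N, L (j + 1) ≤ (1 + c₁) * fm (j + 1)) :
    (∫ s in t 0..t (N + 1), g s) ≤ C * M * (t (N + 1) - t 0) +
      c₀ ^ 2 * (∫ s in t 0..t (N + 1), h s) + L 0 + N * (c₁ * M) := by
  have := integral_le_of_jumps (ψ := fun s => C * M + c₀ ^ 2 * h s) hc₁ ht
    (fun j hj s hs => (hode j hj s hs).1) hf₀ hfM hg
    (intervalIntegrable_const.add (hh.const_mul (c₀ ^ 2)))
    (fun j hj s hs => by nlinarith [(hode j hj s hs).2.1, hfM j hj s hs]) hL hfm hjump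
  rwa [integral_add intervalIntegrable_const (hh.const_mul _), intervalIntegral.integral_const,
    intervalIntegral.integral_const_mul, smul_eq_mul, mul_comm _ (C * M)] at this

end ODE

/-- Discrete-continuous Gronwall inequality with multiplicative jumps at interaction
times `t₁ < ⋯ < t_N`. The constant `C'` is independent of `c₀, c₁` (it depends only
on the constant `C` of the hypotheses). -/
theorem gronwall_with_jumps (C : ℝ) (hC : 0 < C) :
    ∃ C' : ℝ, 0 < C' ∧
      ∀ (c₀ c₁ : ℝ), 0 < c₀ → 0 < c₁ →
      ∀ (T : ℝ) (N : ℕ) (t : ℕ → ℝ) (f g h : ℝ → ℝ) (fp fm : ℕ → ℝ),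
        0 < T → t 0 = 0 → t (N + 1) = T →
        (∀ j ≤ N, t j < t (j + 1)) →
        (∀ s ∈ Icc (0 : ℝ) T, 0 ≤ f s ∧ 0 ≤ g s ∧ 0 ≤ h s) →
        IntervalIntegrable g volume 0 T →
        IntervalIntegrable h volume 0 T →
        (∫ s in (0 : ℝ)..T, h s) ≤ C →
        (∀ j ≤ N, ∀ s ∈ Ioo (t j) (t (j + 1)),
            HasDerivAt f (deriv f s) s ∧
            deriv f s + g s ≤ C * f s + c₀ ^ 2 * h s ∧ c₀ ≤ f s) →
        Tendsto f (nhdsWithin 0 (Ioi (0 : ℝ))) (nhds (f 0)) →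
        (∀ j, 1 ≤ j → j ≤ N →
            Tendsto f (nhdsWithin (t j) (Ioi (t j))) (nhds (fp j)) ∧
            Tendsto f (nhdsWithin (t j) (Iio (t j))) (nhds (fm j))) →
        (∀ j, 1 ≤ j → j ≤ N → fp j ≤ (1 + c₁) * fm j) →
        (∀ᵐ s ∂(volume.restrict (Icc (0 : ℝ) T)),
            f s ≤ f 0 * Real.exp (C' * T + C' * c₀ + N * c₁)) ∧
        (∫ s in (0 : ℝ)..T, g s) ≤
          f 0 * (1 + C' * T + N * c₁) * Real.exp (C' * T + C' * c₀ + N * c₁) +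
            C' * c₀ ^ 2 := by
  refine ⟨C, hC, fun c₀ c₁ hc₀ hc₁ T N t f g h fp fm hT ht0 htN ht hnn hg hh hhC hode hf0 hlim
    hjump => ?_⟩
  subst htN
  have hnn' (s : ℝ) (hs : s ∈ Icc (t 0) (t (N + 1))) := hnn s (ht0 ▸ hs)
  have hf₀ : 0 ≤ f 0 := (hnn 0 (left_mem_Icc.2 hT.le)).1
  set L : ℕ → ℝ := fun j => if j = 0 then f 0 else fp j
  have hL : ∀ j ≤ N, Tendsto f (𝓝[>] t j) (𝓝 (L j))
    | 0, _ => by simpa [L, ht0] using hf0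
    | j + 1, hj => by simpa [L] using (hlim (j + 1) j.succ_pos hj).1
  have hL₀ : L 0 = f 0 := if_pos rfl
  have hfm (j : ℕ) (hj : j < N) := (hlim (j + 1) j.succ_pos hj).2
  have hjump' (j : ℕ) (hj : j < N) : L (j + 1) ≤ (1 + c₁) * fm (j + 1) :=
    hjump (j + 1) j.succ_pos hj
  set M := f 0 * Real.exp (C * t (N + 1) + C * c₀ + N * c₁) with hM
  have hfM (j : ℕ) (hj : j ≤ N) (s : ℝ) (hs : s ∈ Ioo (t j) (t (j + 1))) : f s ≤ M := by
    refine (le_mul_exp_of_ode_of_jumps hC.le hc₀ hc₁.le hf₀ ht (fun s hs => (hnn' s hs).2)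
      (ht0 ▸ hh) hode hL hfm hjump' j hj s hs).trans ?_
    rw [ht0, hL₀, hM]
    gcongr f 0 * Real.exp ?_
    nlinarith [mul_le_mul_of_nonneg_left hhC hc₀.le]
  refine ⟨ht0 ▸ ae_restrict_Icc_of_forall_mem_Ioo hfM, ?_⟩
  have hg_le := integral_le_of_ode_of_jumps hC.le hc₁.le ht (fun s hs => (hnn' s hs).1) hfM
    (ht0 ▸ hg) (ht0 ▸ hh) hode hL hfm hjump'
  have hM₀ : f 0 ≤ M := le_mul_of_one_le_right hf₀ (Real.one_le_exp (by positivity))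
  rw [ht0, sub_zero, hL₀] at hg_le
  calc (∫ s in (0 : ℝ)..t (N + 1), g s)
    _ ≤ M * (1 + C * t (N + 1) + N * c₁) + C * c₀ ^ 2 := by
        nlinarith [mul_le_mul_of_nonneg_left hhC (sq_nonneg c₀)]
    _ = _ := by rw [hM]; ring
end

section
/- Let γ > 1 and α = 2/(γ−1), and let ⃐φ, ⃑φ be the backward/forward auxiliary wave-curve functions. Given left state (z̄, h̄) and right state (z, h) with z̄, z > 0, the function b ↦ z̄·⃐φ(b) + z·⃐φ(b z̄ / z) is strictly increasing on (0,∞), ranges over (−(z̄+z), +∞), and hence the equation z̄ ⃐φ(b) + z ⃐φ(b z̄/z) = h̄ − h has a unique positive root b if and only if h − h̄ < z + z̄ (the no-vacuum condition). -/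
open Set Filter Real Topology

/-!
On `(0, ∞)` the function `⃐φ` coincides with `W x = min x 1 - 1 + S (max x 1)`, where
`S x = c √((1 - x ^ (-p)) (x ^ q - 1))` is the shock branch. Since `S 1 = 0`, `W` is continuous
on all of `ℝ`; it is strictly increasing, `W 0 = -1` and `W → ∞`. Hence `b ↦ z̄ W b + z W (b z̄ / z)`
is continuous and strictly increasing, equals `-(z̄ + z)` at `0` and tends to `∞`, so by the
intermediate value theorem it maps `(0, ∞)` onto `(-(z̄ + z), ∞)`, and injectivity makes the root
unique.
-/

noncomputable def shockCurve (c p q x : ℝ) : ℝ :=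
  c * √((1 - x ^ (-p)) * (x ^ q - 1))

noncomputable def waveCurve (c p q x : ℝ) : ℝ :=
  min x 1 - 1 + shockCurve c p q (max x 1)

section
variable {c p q : ℝ}

@[simp]
lemma shockCurve_one : shockCurve c p q 1 = 0 := by
  simp [shockCurve]

lemma continuousOn_shockCurve : ContinuousOn (shockCurve c p q) (Ioi 0) := by
  intro x hx
  have hx0 : x ≠ 0 := (mem_Ioi.mp hx).ne'
  have : ContinuousAt (shockCurve c p q) x := by
    unfold shockCurve
    fun_prop (disch := exact Or.inl hx0)
  exact this.continuousWithinAt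

lemma strictMonoOn_shockCurve (hc : 0 < c) (hp : 0 < p) (hq : 0 < q) :
    StrictMonoOn (shockCurve c p q) (Ici 1) := by
  intro x (hx : 1 ≤ x) y _ hxy
  have hx0 : 0 < x := by linarith
  have h₁ : y ^ (-p) < x ^ (-p) := rpow_lt_rpow_of_neg hx0 hxy (neg_neg_of_pos hp)
  have h₂ : x ^ q < y ^ q := rpow_lt_rpow hx0.le hxy hq
  have h₁' : 0 ≤ 1 - x ^ (-p) :=
    sub_nonneg.mpr (rpow_le_one_of_one_le_of_nonpos hx (by linarith))
  have h₂' : 0 ≤ x ^ q - 1 := sub_nonneg.mpr (one_le_rpow hx hq.le)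
  have hprod : (1 - x ^ (-p)) * (x ^ q - 1) < (1 - y ^ (-p)) * (y ^ q - 1) :=
    mul_lt_mul'' (by linarith) (by linarith) h₁' h₂'
  exact mul_lt_mul_of_pos_left (sqrt_lt_sqrt (mul_nonneg h₁' h₂') hprod) hc

lemma tendsto_shockCurve_atTop (hc : 0 < c) (hp : 0 < p) (hq : 0 < q) :
    Tendsto (shockCurve c p q) atTop atTop := by
  have h₁ : Tendsto (fun x : ℝ => 1 - x ^ (-p)) atTop (𝓝 1) := by
    simpa using (tendsto_rpow_neg_atTop hp).const_sub 1
  have h₂ : Tendsto (fun x : ℝ => x ^ q - 1) atTop atTop :=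
    tendsto_atTop_add_const_right _ _ (tendsto_rpow_atTop hq)
  exact (tendsto_sqrt_atTop.comp (h₁.pos_mul_atTop one_pos h₂)).const_mul_atTop hc

@[fun_prop]
lemma continuous_waveCurve : Continuous (waveCurve c p q) := by
  have : Continuous fun x : ℝ => shockCurve c p q (max x 1) :=
    continuousOn_shockCurve.comp_continuous (by fun_prop)
      fun x => lt_of_lt_of_le one_pos (le_max_right x 1)
  unfold waveCurve
  fun_prop

lemma waveCurve_zero : waveCurve c p q 0 = -1 := by
  simp [waveCurve]

lemma strictMono_waveCurve (hc : 0 < c) (hp : 0 < p) (hq : 0 < q) :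
    StrictMono (waveCurve c p q) := by
  intro x y hxy
  have hshock := strictMonoOn_shockCurve hc hp hq
  have hmin : min x 1 ≤ min y 1 := min_le_min_right 1 hxy.le
  have hmax : shockCurve c p q (max x 1) ≤ shockCurve c p q (max y 1) :=
    hshock.monotoneOn (le_max_right x 1) (le_max_right y 1) (max_le_max_right 1 hxy.le)
  unfold waveCurve
  rcases lt_or_ge x 1 with hx | hx
  · have : min x 1 < min y 1 := by rw [min_eq_left hx.le]; exact lt_min hxy hx
    linarith
  · have : shockCurve c p q (max x 1) < shockCurve c p q (max y 1) := by
      rw [max_eq_left hx, max_eq_left (hx.trans hxy.le)]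
      exact hshock hx (hx.trans hxy.le) hxy
    linarith

lemma tendsto_waveCurve_atTop (hc : 0 < c) (hp : 0 < p) (hq : 0 < q) :
    Tendsto (waveCurve c p q) atTop atTop := by
  refine (tendsto_shockCurve_atTop hc hp hq).congr' ?_
  filter_upwards [eventually_ge_atTop 1] with x hx
  simp [waveCurve, hx]

lemma eqOn_waveCurve {φ : ℝ → ℝ} (h₁ : ∀ x, 0 < x → x ≤ 1 → φ x = x - 1)
    (h₂ : ∀ x, 1 < x → φ x = shockCurve c p q x) : EqOn φ (waveCurve c p q) (Ioi 0) := by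
  intro x (hx : 0 < x)
  rcases le_or_gt x 1 with hx1 | hx1
  · simp [waveCurve, h₁ x hx hx1, hx1]
  · simp [waveCurve, h₂ x hx1, hx1.le]

end

lemma Set.InjOn.existsUnique_mem_and_eq_iff {α β : Type*} {f : α → β} {s : Set α}
    (hf : InjOn f s) {y : β} : (∃! x, x ∈ s ∧ f x = y) ↔ y ∈ f '' s :=
  ⟨fun ⟨x, hx, _⟩ => ⟨x, hx⟩, fun ⟨x, hxs, hxy⟩ =>
    ⟨x, ⟨hxs, hxy⟩, fun _ ⟨hx's, hx'y⟩ => hf hx's hxs (hx'y.trans hxy.symm)⟩⟩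

noncomputable def waveSum (W : ℝ → ℝ) (zb z b : ℝ) : ℝ :=
  zb * W b + z * W (b * zb / z)

section
variable {W : ℝ → ℝ} {zb z : ℝ}

lemma Set.EqOn.waveSum {φ : ℝ → ℝ} (h : EqOn φ W (Ioi 0)) (hzb : 0 < zb) (hz : 0 < z) :
    EqOn (waveSum φ zb z) (waveSum W zb z) (Ioi 0) := fun b (hb : 0 < b) => by
  simp only [_root_.waveSum, h hb, h (show 0 < b * zb / z by positivity)]

lemma strictMono_waveSum (hW : StrictMono W) (hzb : 0 < zb) (hz : 0 < z) :
    StrictMono (waveSum W zb z) := by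
  intro x y hxy
  have h₁ := mul_lt_mul_of_pos_left (hW hxy) hzb
  have h₂ := mul_lt_mul_of_pos_left (hW (show x * zb / z < y * zb / z by gcongr)) hz
  exact add_lt_add h₁ h₂

lemma tendsto_waveSum_atTop (hW : Tendsto W atTop atTop) (hzb : 0 < zb) (hz : 0 < z) :
    Tendsto (waveSum W zb z) atTop atTop :=
  (hW.const_mul_atTop hzb).atTop_add_atTop <| (hW.comp <|
    (tendsto_id.atTop_mul_const hzb).atTop_div_const hz).const_mul_atTop hz

lemma image_Ioi_waveSum (hWc : Continuous W) (hW : StrictMono W) (hW₀ : W 0 = -1)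
    (hWtop : Tendsto W atTop atTop) (hzb : 0 < zb) (hz : 0 < z) :
    waveSum W zb z '' Ioi 0 = Ioi (-(zb + z)) := by
  have hcont : Continuous (waveSum W zb z) := by unfold waveSum; fun_prop
  rw [hcont.continuousOn.image_Ioi_of_strictMonoOn
    ((strictMono_waveSum hW hzb hz).strictMonoOn _) (tendsto_waveSum_atTop hWtop hzb hz)]
  rw [waveSum, zero_mul, zero_div, hW₀]
  ring_nf

end

/-- Unique solvability of the Riemann problem of the p-system without vacuum:
the function `b ↦ z̄ ⃐φ(b) + z ⃐φ(b z̄ / z)` is strictly increasing on `(0,∞)` with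
range `(-(z̄+z), ∞)`, so the wave equation has a unique positive root iff
`h - h̄ < z + z̄`. -/
theorem riemann_problem_no_vacuum (γ : ℝ) (hγ : 1 < γ) (α : ℝ)
    (hα : α = 2 / (γ - 1)) (φb : ℝ → ℝ)
    (hb₁ : ∀ x : ℝ, 0 < x → x ≤ 1 → φb x = x - 1)
    (hb₂ : ∀ x : ℝ, 1 < x →
        φb x = (γ - 1) / (2 * Real.sqrt γ) *
          Real.sqrt ((1 - x ^ (-1 / α)) * (x ^ (γ / α) - 1)))
    (zb z hb h : ℝ) (hzb : 0 < zb) (hz : 0 < z) :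
    StrictMonoOn (fun b => zb * φb b + z * φb (b * zb / z)) (Ioi 0) ∧
    (fun b => zb * φb b + z * φb (b * zb / z)) '' Ioi 0 = Ioi (-(zb + z)) ∧
    ((∃! b : ℝ, 0 < b ∧ zb * φb b + z * φb (b * zb / z) = hb - h) ↔
      h - hb < z + zb) := by
  have hc : 0 < (γ - 1) / (2 * √γ) := div_pos (sub_pos.mpr hγ) (by positivity)
  have hα₀ : 0 < α := by rw [hα]; exact div_pos two_pos (sub_pos.mpr hγ)
  have hp : 0 < 1 / α := one_div_pos.mpr hα₀
  have hq : 0 < γ / α := div_pos (one_pos.trans hγ) hα₀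
  have hφ : EqOn φb (waveCurve ((γ - 1) / (2 * √γ)) (1 / α) (γ / α)) (Ioi 0) :=
    eqOn_waveCurve hb₁ fun x hx => by rw [hb₂ x hx, shockCurve, neg_div]
  have hmono : StrictMonoOn (waveSum φb zb z) (Ioi 0) :=
    ((strictMono_waveSum (strictMono_waveCurve hc hp hq) hzb hz).strictMonoOn _).congr
      (hφ.waveSum hzb hz).symm
  have himage : waveSum φb zb z '' Ioi 0 = Ioi (-(zb + z)) := by
    rw [(hφ.waveSum hzb hz).image_eq]
    exact image_Ioi_waveSum continuous_waveCurve (strictMono_waveCurve hc hp hq) waveCurve_zero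
      (tendsto_waveCurve_atTop hc hp hq) hzb hz
  refine ⟨hmono, himage, ?_⟩
  change (∃! b, b ∈ Ioi (0 : ℝ) ∧ waveSum φb zb z b = hb - h) ↔ _
  rw [hmono.injOn.existsUnique_mem_and_eq_iff, himage, mem_Ioi]
  constructor <;> intro <;> linarith
end

section
/- Let γ > 1 and fix v̄ in a compact subinterval of (0,∞) (e.g. v̄ ∈ [v*/2, 2v*] for some v* > 0). Then there exists C > 0 such that p(v|v̄) ≤ C Q(v|v̄) for all v > 2v*, where p(v) = v^{−γ}, Q(v) = v^{1−γ}/(γ−1), and the relative functionals are defined as F(v|v̄) = F(v) − F(v̄) − F'(v̄)(v − v̄). -/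
/-!
A relative functional `F v - F v̄ - F' v̄ * (v - v̄)` is a Taylor remainder, so it is monotone in
`F''` on `v ≥ v̄`. Here `p'' v = γ (γ + 1) v ^ (-γ - 2)` and `(C Q)'' v = C γ v ^ (-γ - 1)`, so
`p'' ≤ (C Q)''` wherever `γ + 1 ≤ C v`; for `v ≥ v̄ ≥ v*/2` this holds with `C = 2 (γ + 1) / v*`.
-/

open Set

lemma monotoneOn_Ici_of_hasDerivAt_nonneg {f f' : ℝ → ℝ} {a : ℝ}
    (hf : ∀ x ∈ Ici a, HasDerivAt f (f' x) x) (hf' : ∀ x ∈ Ioi a, 0 ≤ f' x) :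
    MonotoneOn f (Ici a) :=
  monotoneOn_of_hasDerivWithinAt_nonneg (convex_Ici a)
    (fun x hx ↦ (hf x hx).continuousAt.continuousWithinAt)
    (fun x hx ↦ by
      rw [interior_Ici] at hx ⊢
      exact (hf x (mem_Ici_of_Ioi hx)).hasDerivWithinAt)
    (by rw [interior_Ici]; exact hf')

theorem sub_sub_mul_le_of_deriv2_le {F G F' G' F'' G'' : ℝ → ℝ} {a x : ℝ}
    (hF : ∀ y ∈ Ici a, HasDerivAt F (F' y) y) (hG : ∀ y ∈ Ici a, HasDerivAt G (G' y) y)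
    (hF' : ∀ y ∈ Ici a, HasDerivAt F' (F'' y) y) (hG' : ∀ y ∈ Ici a, HasDerivAt G' (G'' y) y)
    (hle : ∀ y ∈ Ioi a, F'' y ≤ G'' y) (hx : a ≤ x) :
    F x - F a - F' a * (x - a) ≤ G x - G a - G' a * (x - a) := by
  have hslope : MonotoneOn (fun y ↦ G' y - F' y) (Ici a) :=
    monotoneOn_Ici_of_hasDerivAt_nonneg (fun y hy ↦ (hG' y hy).sub (hF' y hy))
      (fun y hy ↦ sub_nonneg.2 (hle y hy))
  have hgap : MonotoneOn (fun y ↦ G y - F y - (G' a - F' a) * (y - a)) (Ici a) := by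
    refine monotoneOn_Ici_of_hasDerivAt_nonneg
      (fun y hy ↦ (((hG y hy).sub (hF y hy)).sub
        (((hasDerivAt_id y).sub_const a).const_mul (G' a - F' a))))
      (fun y hy ↦ ?_)
    have := hslope self_mem_Ici (mem_Ici_of_Ioi hy) (le_of_lt hy)
    simp only [mul_one]
    linarith
  have := hgap self_mem_Ici hx hx
  simp only [sub_self, mul_zero] at this
  linarith

lemma relative_pressure_le_relative_Q_of_le_mul {γ C vb v : ℝ} (hγ : 1 < γ) (hvb : 0 < vb)
    (hC : γ + 1 ≤ C * vb) (hv : vb ≤ v) :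
    v ^ (-γ) - vb ^ (-γ) + γ * vb ^ (-γ - 1) * (v - vb) ≤
      C * (v ^ (1 - γ) / (γ - 1) - vb ^ (1 - γ) / (γ - 1) + vb ^ (-γ) * (v - vb)) := by
  have hpos : ∀ y ∈ Ici vb, 0 < y := fun y hy ↦ hvb.trans_le hy
  have hγ1 : γ - 1 ≠ 0 := sub_ne_zero.2 hγ.ne'
  have hpow : ∀ y ∈ Ici vb, ∀ q : ℝ, HasDerivAt (fun y : ℝ ↦ y ^ q) (q * y ^ (q - 1)) y :=
    fun y hy _ ↦ Real.hasDerivAt_rpow_const (Or.inl (hpos y hy).ne')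
  have hp : ∀ y ∈ Ici vb, HasDerivAt (fun y : ℝ ↦ y ^ (-γ)) (-γ * y ^ (-γ - 1)) y :=
    fun y hy ↦ hpow y hy (-γ)
  have hp' : ∀ y ∈ Ici vb,
      HasDerivAt (fun y : ℝ ↦ -γ * y ^ (-γ - 1)) (γ * (γ + 1) * y ^ (-γ - 2)) y := by
    intro y hy
    refine ((hpow y hy (-γ - 1)).const_mul (-γ)).congr_deriv ?_
    rw [show -γ - 1 - 1 = -γ - 2 by ring]
    ring
  have hQ : ∀ y ∈ Ici vb,
      HasDerivAt (fun y : ℝ ↦ C * (y ^ (1 - γ) / (γ - 1))) (-C * y ^ (-γ)) y := by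
    intro y hy
    refine (((hpow y hy (1 - γ)).div_const (γ - 1)).const_mul C).congr_deriv ?_
    rw [show 1 - γ - 1 = -γ by ring]
    field_simp
    ring
  have hQ' : ∀ y ∈ Ici vb, HasDerivAt (fun y : ℝ ↦ -C * y ^ (-γ)) (C * γ * y ^ (-γ - 1)) y := by
    intro y hy
    refine ((hpow y hy (-γ)).const_mul (-C)).congr_deriv ?_
    ring
  have hle : ∀ y ∈ Ioi vb, γ * (γ + 1) * y ^ (-γ - 2) ≤ C * γ * y ^ (-γ - 1) := by
    intro y hy
    have hy0 : 0 < y := hvb.trans hy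
    have hC0 : 0 < C := pos_of_mul_pos_left (by linarith) hvb.le
    have hCy : γ + 1 ≤ C * y := hC.trans (by gcongr; exact hy.le)
    rw [show -γ - 1 = (-γ - 2) + 1 by ring, Real.rpow_add_one hy0.ne']
    calc γ * (γ + 1) * y ^ (-γ - 2) ≤ γ * (C * y) * y ^ (-γ - 2) := by gcongr
      _ = C * γ * (y ^ (-γ - 2) * y) := by ring
  convert sub_sub_mul_le_of_deriv2_le hp hQ hp' hQ' hle hv using 1 <;> ring

/-- For base points `v̄ ∈ [v*/2, 2v*]`, the relative pressure is dominated by the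
relative internal energy for large specific volume `v > 2v*`, uniformly in `v̄`. -/
theorem relative_pressure_le_relative_Q (γ : ℝ) (hγ : 1 < γ) (vs : ℝ)
    (hvs : 0 < vs) :
    ∃ C > 0, ∀ vb : ℝ, vs / 2 ≤ vb → vb ≤ 2 * vs → ∀ v : ℝ, 2 * vs < v →
      v ^ (-γ) - vb ^ (-γ) + γ * vb ^ (-γ - 1) * (v - vb) ≤
        C * (v ^ (1 - γ) / (γ - 1) - vb ^ (1 - γ) / (γ - 1) +
          vb ^ (-γ) * (v - vb)) := by
  refine ⟨2 * (γ + 1) / vs, by positivity, fun vb hvb_lo hvb_hi v hv ↦ ?_⟩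
  have hC : γ + 1 ≤ 2 * (γ + 1) / vs * vb := by
    rw [div_mul_eq_mul_div, le_div_iff₀ hvs]
    nlinarith
  exact relative_pressure_le_relative_Q_of_le_mul hγ (by linarith) hC (by linarith)
end
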